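/- Let L be a nonnegative random variable with an asymptotically exponential tail with decay rate μ > 0, let M ≥ 2 be an integer, ν > 0, and 0 < ζ < 1. Define the random variable N̂ on the nonnegative integers by P[N̂ > n] = min{ 1, E[(1 − (1/M) e^{−L(M−1)ν})^{⌊n/2⌋}] + 2 ζ^{√(n/2)} }. Then lim_{n→∞} (log P[N̂ > n]) / (log n) = −μ / ((M−1)ν). -/

import Mathlib

open MeasureTheory Filter Asymptotics Real Topology

/-!
Put `X = L (M - 1) ν`, whose tail decays like `exp (-A x)` with `A = μ / ((M - 1) ν)`, and
`I k = E[(1 - e^{-X} / M) ^ k]`. Splitting the expectation at `X = β log k` with `β < 1` bounds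
`I k` above by `exp (-k ^ (1 - β) / M) + P[X > β log k]`, which is `O(k ^ (-B))` for every
`B < A`; restricting it to `{X > log k}`, where `(1 - 1 / (M k)) ^ k ≥ 1 - 1 / M`, bounds it below
by a multiple of `P[X > log k]`, which is at least `k ^ (-B)` for every `B > A`. Hence
`I k = k ^ (-A + o(1))`, the same holds for `I ⌊n / 2⌋` in terms of `n`, and the Weibull term
`2 ζ ^ √(n / 2)` decays faster than every power of `n`, so it does not change the exponent.
-/

lemma tendsto_log_natCast_atTop : Tendsto (fun n : ℕ => log n) atTop atTop :=
  tendsto_log_atTop.comp tendsto_natCast_atTop_atTop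

lemma eventually_log_div_log_lt_of_isBigO {S : ℕ → ℝ} {B b : ℝ}
    (hS : S =O[atTop] fun n : ℕ => (n : ℝ) ^ (-B)) (hS0 : ∀ᶠ n in atTop, S n ≠ 0)
    (hb : -B < b) : ∀ᶠ n in atTop, log (S n) / log n < b := by
  obtain ⟨C, hC, hSC⟩ := hS.exists_pos
  have hsmall : ∀ᶠ n : ℕ in atTop, log C / log n < b + B :=
    (tendsto_const_nhds.div_atTop tendsto_log_natCast_atTop).eventually
      (gt_mem_nhds (by linarith))
  filter_upwards [hSC.bound, hS0, hsmall, eventually_gt_atTop 1] with n hn hn0 hsmall hn1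
  have hlog : 0 < log n := log_pos (by exact_mod_cast hn1)
  have hpos : (0 : ℝ) < n := by positivity
  rw [norm_rpow_of_nonneg hpos.le, Real.norm_natCast] at hn
  have hlogS : log (S n) ≤ log C - B * log n := by
    calc log (S n) = log ‖S n‖ := by rw [Real.norm_eq_abs, log_abs]
      _ ≤ log (C * (n : ℝ) ^ (-B)) := log_le_log (norm_pos_iff.2 hn0) hn
      _ = log C - B * log n := by rw [log_mul hC.ne' (by positivity), log_rpow hpos]; ring
  rw [div_lt_iff₀ hlog] at hsmall ⊢
  linarith

lemma eventually_lt_log_div_log_of_isBigO {S : ℕ → ℝ} {B b : ℝ}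
    (hS : (fun n : ℕ => (n : ℝ) ^ (-B)) =O[atTop] S) (hb : b < -B) :
    ∀ᶠ n in atTop, b < log (S n) / log n := by
  obtain ⟨C, hC, hSC⟩ := hS.exists_pos
  have hsmall : ∀ᶠ n : ℕ in atTop, log C / log n < -B - b :=
    (tendsto_const_nhds.div_atTop tendsto_log_natCast_atTop).eventually
      (gt_mem_nhds (by linarith))
  filter_upwards [hSC.bound, hsmall, eventually_gt_atTop 1] with n hn hsmall hn1
  have hlog : 0 < log n := log_pos (by exact_mod_cast hn1)
  have hpos : (0 : ℝ) < n := by positivity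
  rw [norm_rpow_of_nonneg hpos.le, Real.norm_natCast] at hn
  have hS0 : 0 < ‖S n‖ := pos_of_mul_pos_right ((rpow_pos_of_pos hpos _).trans_le hn) hC.le
  have hlogS : -B * log n ≤ log C + log (S n) := by
    calc -B * log n = log ((n : ℝ) ^ (-B)) := (log_rpow hpos _).symm
      _ ≤ log (C * ‖S n‖) := log_le_log (by positivity) hn
      _ = log C + log (S n) := by rw [log_mul hC.ne' hS0.ne', Real.norm_eq_abs, log_abs]
  rw [div_lt_iff₀ hlog] at hsmall
  rw [lt_div_iff₀ hlog]
  linarith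

lemma tendsto_log_div_log_of_isBigO {S : ℕ → ℝ} {A : ℝ} (hA : 0 < A)
    (hupper : ∀ B, 0 < B → B < A → S =O[atTop] fun n : ℕ => (n : ℝ) ^ (-B))
    (hlower : ∀ B, A < B → (fun n : ℕ => (n : ℝ) ^ (-B)) =O[atTop] S) :
    Tendsto (fun n => log (S n) / log n) atTop (𝓝 (-A)) := by
  have hS0 : ∀ᶠ n in atTop, S n ≠ 0 := by
    filter_upwards [(hlower (A + 1) (by linarith)).eq_zero_imp, eventually_gt_atTop 0]
      with n hn hn0 hS
    exact (rpow_pos_of_pos (Nat.cast_pos.2 hn0) _).ne' (hn hS)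
  refine tendsto_order.2 ⟨fun b hb => ?_, fun b hb => ?_⟩
  · obtain ⟨B, hAB, hBb⟩ := exists_between (show A < -b by linarith)
    exact eventually_lt_log_div_log_of_isBigO (hlower B hAB) (by linarith)
  · obtain ⟨B, hbB, hBA⟩ := exists_between (max_lt (show -b < A by linarith) hA)
    exact eventually_log_div_log_lt_of_isBigO
      (hupper B ((le_max_right _ _).trans_lt hbB) hBA) hS0
      (by linarith [le_max_left (-b) 0])

lemma tendsto_log_min_one_div_log {S : ℕ → ℝ} {A : ℝ} (hA : 0 < A)
    (h : Tendsto (fun n => log (S n) / log n) atTop (𝓝 (-A))) :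
    Tendsto (fun n => log (min 1 (S n)) / log n) atTop (𝓝 (-A)) := by
  refine h.congr' ?_
  filter_upwards [h.eventually (gt_mem_nhds (neg_neg_of_pos hA)), eventually_ge_atTop 1]
    with n hn hn1
  have hS1 : S n < 1 := by
    by_contra! h1
    exact hn.not_ge (div_nonneg (log_nonneg h1) (log_nonneg (by exact_mod_cast hn1)))
  rw [min_eq_right hS1.le]

lemma isTheta_natCast_div_two_rpow (r : ℝ) :
    (fun n : ℕ => ((n / 2 : ℕ) : ℝ) ^ r) =Θ[atTop] fun n : ℕ => (n : ℝ) ^ r := by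
  refine IsTheta.rpow (.of_forall fun _ => by positivity) (.of_forall fun _ => by positivity) ⟨?_, ?_⟩
  · refine isBigO_of_le _ fun n => ?_
    simp only [Real.norm_natCast, Nat.cast_le]
    exact Nat.div_le_self n 2
  · refine IsBigO.of_bound 3 ?_
    filter_upwards [eventually_ge_atTop 2] with n hn
    simp only [Real.norm_natCast]
    exact_mod_cast (by omega : n ≤ 3 * (n / 2))

lemma Asymptotics.IsBigO.comp_div_two_of_rpow {f : ℕ → ℝ} {r : ℝ}
    (h : f =O[atTop] fun k : ℕ => (k : ℝ) ^ r) :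
    (fun n => f (n / 2)) =O[atTop] fun n : ℕ => (n : ℝ) ^ r :=
  (h.comp_tendsto (Nat.tendsto_div_const_atTop two_ne_zero)).trans
    (isTheta_natCast_div_two_rpow r).isBigO

lemma Asymptotics.IsBigO.rpow_comp_div_two {f : ℕ → ℝ} {r : ℝ}
    (h : (fun k : ℕ => (k : ℝ) ^ r) =O[atTop] f) :
    (fun n : ℕ => (n : ℝ) ^ r) =O[atTop] fun n => f (n / 2) :=
  (isTheta_natCast_div_two_rpow r).symm.isBigO.trans
    (h.comp_tendsto (Nat.tendsto_div_const_atTop two_ne_zero))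

lemma isBigO_exp_neg_mul_rpow_natCast {a γ : ℝ} (ha : 0 < a) (hγ : 0 < γ) (B : ℝ) :
    (fun n : ℕ => exp (-(a * (n : ℝ) ^ γ))) =O[atTop] fun n : ℕ => (n : ℝ) ^ (-B) := by
  have h := ((isLittleO_exp_neg_mul_rpow_atTop ha (-B / γ)).comp_tendsto
    ((tendsto_rpow_atTop hγ).comp tendsto_natCast_atTop_atTop)).isBigO
  refine (h.congr_left fun n => by simp [neg_mul]).congr_right fun n => ?_
  simp only [Function.comp_apply]
  rw [← rpow_mul (Nat.cast_nonneg n), mul_div_cancel₀ _ hγ.ne']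

lemma isBigO_rpow_sqrt_natCast_div_two {ζ : ℝ} (hζ0 : 0 < ζ) (hζ1 : ζ < 1) (B : ℝ) :
    (fun n : ℕ => ζ ^ √((n : ℝ) / 2)) =O[atTop] fun n : ℕ => (n : ℝ) ^ (-B) := by
  have hs : 0 < -log ζ / √2 := div_pos (neg_pos.2 (log_neg hζ0 hζ1)) (by positivity)
  refine (isBigO_exp_neg_mul_rpow_natCast hs one_half_pos B).congr_left fun n => ?_
  rw [rpow_def_of_pos hζ0, sqrt_div (Nat.cast_nonneg n), ← sqrt_eq_rpow]
  ring_nf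

lemma one_sub_pow_le_exp_neg_mul {t : ℝ} (ht : t ≤ 1) (k : ℕ) :
    (1 - t) ^ k ≤ exp (-(k * t)) :=
  calc (1 - t) ^ k ≤ exp (-t) ^ k := pow_le_pow_left₀ (by linarith) (one_sub_le_exp_neg t) k
    _ = exp (-(k * t)) := by rw [← exp_nat_mul]; ring_nf

lemma one_sub_le_one_sub_div_pow {t : ℝ} (ht0 : 0 ≤ t) (ht2 : t ≤ 2) {k : ℕ} (hk : k ≠ 0) :
    1 - t ≤ (1 - t / k) ^ k := by
  have hk1 : (1 : ℝ) ≤ k := by exact_mod_cast Nat.one_le_iff_ne_zero.2 hk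
  have htk : t / k ≤ 2 := (div_le_self ht0 hk1).trans ht2
  calc 1 - t = 1 + k * -(t / k) := by field_simp; ring
    _ ≤ (1 + -(t / k)) ^ k := one_add_mul_le_pow (by linarith) k
    _ = (1 - t / k) ^ k := by ring

lemma one_sub_mul_exp_neg_nonneg {a : ℝ} (ha0 : 0 ≤ a) (ha1 : a ≤ 1) {t : ℝ} (ht : 0 ≤ t) :
    0 ≤ 1 - a * exp (-t) := by
  nlinarith [exp_le_one_iff.2 (neg_nonpos.2 ht), exp_pos (-t)]

lemma one_sub_mul_exp_neg_le_one {a : ℝ} (ha0 : 0 ≤ a) (t : ℝ) : 1 - a * exp (-t) ≤ 1 := by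
  nlinarith [exp_pos (-t)]

lemma eventually_le_exp_of_tendsto_log_div {g : ℝ → ℝ} {A C : ℝ}
    (h : Tendsto (fun x => log (g x) / x) atTop (𝓝 (-A))) (hC : C < A) :
    ∀ᶠ x in atTop, g x ≤ exp (-C * x) := by
  filter_upwards [h.eventually (gt_mem_nhds (neg_lt_neg hC)), eventually_gt_atTop 0]
    with x hx hx0
  rw [div_lt_iff₀ hx0] at hx
  exact (le_exp_log _).trans (exp_le_exp.2 hx.le)

lemma eventually_exp_le_of_tendsto_log_div {g : ℝ → ℝ} {A C : ℝ} (hA : 0 < A)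
    (hg : ∀ x, 0 ≤ g x) (h : Tendsto (fun x => log (g x) / x) atTop (𝓝 (-A))) (hC : A < C) :
    ∀ᶠ x in atTop, exp (-C * x) ≤ g x := by
  filter_upwards [h.eventually (lt_mem_nhds (neg_lt_neg hC)),
    h.eventually (gt_mem_nhds (neg_neg_of_pos hA)), eventually_gt_atTop 0] with x hx hx' hx0
  rw [lt_div_iff₀ hx0] at hx
  rw [div_lt_iff₀ hx0, zero_mul] at hx'
  -- `log (g x) < 0` rules out the junk value `log 0 = 0`
  have hgx : 0 < g x := (hg x).lt_of_ne fun h0 => hx'.ne (by rw [← h0, log_zero])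
  rw [← exp_log hgx]
  exact exp_le_exp.2 hx.le

lemma tendsto_log_comp_div_const_div {g : ℝ → ℝ} {A c : ℝ} (hc : 0 < c)
    (h : Tendsto (fun x => log (g x) / x) atTop (𝓝 (-A))) :
    Tendsto (fun x => log (g (x / c)) / x) atTop (𝓝 (-(A / c))) := by
  have := (h.comp (tendsto_id.atTop_div_const hc)).div_const c
  rw [neg_div] at this
  refine this.congr fun x => ?_
  simp only [Function.comp_apply, id]
  rcases eq_or_ne x 0 with rfl | hx
  · simp
  · field_simp

section Moments

variable {Ω : Type*} {mΩ : MeasurableSpace Ω} {P : Measure Ω}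

lemma integral_le_add_measureReal [IsProbabilityMeasure P] {Y : Ω → ℝ} (hY : Integrable Y P)
    (hY1 : ∀ ω, Y ω ≤ 1) {C : ℝ} (hC : 0 ≤ C) {s : Set Ω} (hs : MeasurableSet s)
    (hYs : ∀ ω ∉ s, Y ω ≤ C) : ∫ ω, Y ω ∂P ≤ C + P.real s := by
  have hind : Integrable (s.indicator (1 : Ω → ℝ)) P := (integrable_const 1).indicator hs
  calc ∫ ω, Y ω ∂P ≤ ∫ ω, (C + s.indicator 1 ω) ∂P := by
        refine integral_mono hY ((integrable_const C).add hind) fun ω => ?_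
        by_cases hω : ω ∈ s
        · simp only [Set.indicator_of_mem hω, Pi.one_apply]
          linarith [hY1 ω]
        · simp only [Set.indicator_of_notMem hω]
          linarith [hYs ω hω]
    _ = C + P.real s := by
        rw [integral_add (integrable_const C) hind, integral_const, integral_indicator_one hs]
        simp

lemma mul_measureReal_le_integral [IsFiniteMeasure P] {Y : Ω → ℝ} (hY0 : ∀ ω, 0 ≤ Y ω)
    (hY : Integrable Y P) {C : ℝ} (hC : 0 ≤ C) {s : Set Ω} (hYs : ∀ ω ∈ s, C ≤ Y ω) :
    C * P.real s ≤ ∫ ω, Y ω ∂P :=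
  calc C * P.real s ≤ C * P.real {ω | C ≤ Y ω} :=
        mul_le_mul_of_nonneg_left (measureReal_mono hYs) hC
    _ ≤ ∫ ω, Y ω ∂P := mul_meas_ge_le_integral_of_nonneg (.of_forall hY0) hY C

variable [IsProbabilityMeasure P] {X : Ω → ℝ} {a A B : ℝ}

lemma integrable_one_sub_mul_exp_neg_pow (hXm : Measurable X) (hX : ∀ ω, 0 ≤ X ω)
    (ha0 : 0 ≤ a) (ha1 : a ≤ 1) (k : ℕ) :
    Integrable (fun ω => (1 - a * exp (-X ω)) ^ k) P := by
  refine .of_bound (by fun_prop) 1 (.of_forall fun ω => ?_)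
  have h0 := one_sub_mul_exp_neg_nonneg ha0 ha1 (hX ω)
  rw [Real.norm_of_nonneg (pow_nonneg h0 k)]
  exact pow_le_one₀ h0 (one_sub_mul_exp_neg_le_one ha0 _)

lemma integral_one_sub_mul_exp_neg_pow_le (hXm : Measurable X) (hX : ∀ ω, 0 ≤ X ω)
    (ha0 : 0 ≤ a) (ha1 : a ≤ 1) {x : ℝ} (hx : 0 ≤ x) (k : ℕ) :
    ∫ ω, (1 - a * exp (-X ω)) ^ k ∂P ≤ (1 - a * exp (-x)) ^ k + P.real {ω | x < X ω} := by
  refine integral_le_add_measureReal (integrable_one_sub_mul_exp_neg_pow hXm hX ha0 ha1 k)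
    (fun ω => pow_le_one₀ (one_sub_mul_exp_neg_nonneg ha0 ha1 (hX ω))
      (one_sub_mul_exp_neg_le_one ha0 _))
    (pow_nonneg (one_sub_mul_exp_neg_nonneg ha0 ha1 hx) k)
    (measurableSet_lt measurable_const hXm) fun ω hω => ?_
  have hXx : X ω ≤ x := not_lt.1 hω
  gcongr
  exact one_sub_mul_exp_neg_nonneg ha0 ha1 (hX ω)

lemma pow_mul_measureReal_le_integral_one_sub_mul_exp_neg_pow (hXm : Measurable X)
    (hX : ∀ ω, 0 ≤ X ω) (ha0 : 0 ≤ a) (ha1 : a ≤ 1) {x : ℝ} (hx : 0 ≤ x) (k : ℕ) :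
    (1 - a * exp (-x)) ^ k * P.real {ω | x < X ω} ≤ ∫ ω, (1 - a * exp (-X ω)) ^ k ∂P := by
  refine mul_measureReal_le_integral (fun ω => pow_nonneg
    (one_sub_mul_exp_neg_nonneg ha0 ha1 (hX ω)) k)
    (integrable_one_sub_mul_exp_neg_pow hXm hX ha0 ha1 k)
    (pow_nonneg (one_sub_mul_exp_neg_nonneg ha0 ha1 hx) k) fun ω hω => ?_
  have hxX : x ≤ X ω := le_of_lt hω
  gcongr
  exact one_sub_mul_exp_neg_nonneg ha0 ha1 hx

theorem isBigO_integral_one_sub_mul_exp_neg_pow_rpow (hXm : Measurable X) (hX : ∀ ω, 0 ≤ X ω)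
    (ha0 : 0 < a) (ha1 : a ≤ 1)
    (htail : Tendsto (fun x => log (P.real {ω | x < X ω}) / x) atTop (𝓝 (-A)))
    (hB : 0 < B) (hBA : B < A) :
    (fun k : ℕ => ∫ ω, (1 - a * exp (-X ω)) ^ k ∂P) =O[atTop] fun k : ℕ => (k : ℝ) ^ (-B) := by
  obtain ⟨C, hBC, hCA⟩ := exists_between hBA
  have hC : 0 < C := hB.trans hBC
  set β := B / C with hβ
  have hβ0 : 0 < β := div_pos hB hC
  have hβ1 : β < 1 := (div_lt_one hC).2 hBC
  -- cut off at `X = β log k`: the tail beyond costs `k ^ (-B)`, the bulk `exp (-a k ^ (1 - β))`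
  have htail' : ∀ᶠ k : ℕ in atTop, P.real {ω | β * log k < X ω} ≤ (k : ℝ) ^ (-B) := by
    filter_upwards [(tendsto_log_natCast_atTop.const_mul_atTop hβ0).eventually
      (eventually_le_exp_of_tendsto_log_div htail hCA), eventually_gt_atTop 0] with k hk hk0
    calc _ ≤ exp (-C * (β * log k)) := hk
      _ = (k : ℝ) ^ (-B) := by
          rw [rpow_def_of_pos (by positivity), hβ]
          field_simp
  have hbulk : ∀ k : ℕ, 0 < k →
      (1 - a * exp (-(β * log k))) ^ k ≤ exp (-(a * (k : ℝ) ^ (1 - β))) := by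
    intro k hk
    have hkpos : (0 : ℝ) < k := by exact_mod_cast hk
    have hexp : exp (-(β * log k)) ≤ 1 :=
      exp_le_one_iff.2 (neg_nonpos.2 (mul_nonneg hβ0.le (log_natCast_nonneg k)))
    calc (1 - a * exp (-(β * log k))) ^ k ≤ exp (-(k * (a * exp (-(β * log k))))) :=
          one_sub_pow_le_exp_neg_mul (mul_le_one₀ ha1 (exp_pos _).le hexp) k
      _ = exp (-(a * (k : ℝ) ^ (1 - β))) := by
          rw [rpow_def_of_pos hkpos]
          nth_rewrite 1 [← exp_log hkpos]
          rw [mul_left_comm, ← exp_add]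
          ring_nf
  refine IsBigO.trans ?_
    ((isBigO_exp_neg_mul_rpow_natCast ha0 (sub_pos.2 hβ1) B).add (isBigO_refl _ _))
  refine IsBigO.of_bound' ?_
  filter_upwards [htail', eventually_gt_atTop 0] with k hk hk0
  rw [norm_of_nonneg (integral_nonneg fun ω => pow_nonneg
    (one_sub_mul_exp_neg_nonneg ha0.le ha1 (hX ω)) k), norm_of_nonneg (by positivity)]
  calc ∫ ω, (1 - a * exp (-X ω)) ^ k ∂P
      ≤ (1 - a * exp (-(β * log k))) ^ k + P.real {ω | β * log k < X ω} :=
        integral_one_sub_mul_exp_neg_pow_le hXm hX ha0.le ha1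
          (mul_nonneg hβ0.le (log_natCast_nonneg k)) k
    _ ≤ exp (-(a * (k : ℝ) ^ (1 - β))) + (k : ℝ) ^ (-B) := add_le_add (hbulk k hk0) hk

theorem isBigO_rpow_integral_one_sub_mul_exp_neg_pow (hXm : Measurable X) (hX : ∀ ω, 0 ≤ X ω)
    (ha0 : 0 ≤ a) (ha1 : a < 1) (hA : 0 < A)
    (htail : Tendsto (fun x => log (P.real {ω | x < X ω}) / x) atTop (𝓝 (-A))) (hAB : A < B) :
    (fun k : ℕ => (k : ℝ) ^ (-B)) =O[atTop] fun k : ℕ => ∫ ω, (1 - a * exp (-X ω)) ^ k ∂P := by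
  -- cut off at `X = log k`, where `(1 - a / k) ^ k ≥ 1 - a`
  have htail' := tendsto_log_natCast_atTop.eventually
    (eventually_exp_le_of_tendsto_log_div hA (fun _ => measureReal_nonneg) htail hAB)
  refine IsBigO.of_bound (1 - a)⁻¹ ?_
  filter_upwards [htail', eventually_gt_atTop 0] with k hk hk0
  have hkpos : (0 : ℝ) < k := by exact_mod_cast hk0
  rw [norm_of_nonneg (rpow_nonneg hkpos.le _), norm_of_nonneg (integral_nonneg fun ω =>
    pow_nonneg (one_sub_mul_exp_neg_nonneg ha0 ha1.le (hX ω)) k),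
    le_inv_mul_iff₀ (sub_pos.2 ha1)]
  calc (1 - a) * (k : ℝ) ^ (-B)
      ≤ (1 - a * exp (-log k)) ^ k * P.real {ω | log k < X ω} := by
        have hbulk : 1 - a ≤ (1 - a * exp (-log k)) ^ k := by
          rw [exp_neg, exp_log hkpos, ← div_eq_mul_inv]
          exact one_sub_le_one_sub_div_pow ha0 (by linarith) hk0.ne'
        have hPk : (k : ℝ) ^ (-B) ≤ P.real {ω | log k < X ω} := by
          rwa [rpow_def_of_pos hkpos, mul_comm]
        exact mul_le_mul hbulk hPk (by positivity) (by linarith [hbulk])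
    _ ≤ ∫ ω, (1 - a * exp (-X ω)) ^ k ∂P :=
        pow_mul_measureReal_le_integral_one_sub_mul_exp_neg_pow hXm hX ha0 ha1.le
          (log_natCast_nonneg k) k

end Moments

/-- Proposition 2: the dominating random variable `N̂` with
`P[N̂ > n] = min{1, E[(1-(1/M)e^{-L(M-1)ν})^{⌊n/2⌋}] + 2ζ^{√(n/2)}}` has a power law
tail of index `μ/((M-1)ν)`. -/
theorem stmt12 {Ω : Type*} {mΩ : MeasurableSpace Ω} (P : Measure Ω) [IsProbabilityMeasure P]
    (L : Ω → ℝ) (hLm : Measurable L) (hLnn : ∀ ω, 0 ≤ L ω)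
    (μ ν ζ : ℝ) (hμ : 0 < μ) (hν : 0 < ν) (hζ0 : 0 < ζ) (hζ1 : ζ < 1)
    (M : ℕ) (hM : 2 ≤ M)
    (htail : Tendsto (fun x : ℝ => Real.log (P {ω | L ω > x}).toReal / x) atTop (nhds (-μ))) :
    Tendsto (fun n : ℕ =>
        Real.log (min 1
            ((∫ ω, (1 - (1 / (M : ℝ)) * Real.exp (-(L ω * ((M : ℝ) - 1) * ν))) ^ (n / 2) ∂P)
              + 2 * ζ ^ Real.sqrt ((n : ℝ) / 2)))
          / Real.log n) atTop
      (nhds (-(μ / (((M : ℝ) - 1) * ν)))) := by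
  have hM1 : (1 : ℝ) < M := by exact_mod_cast hM
  have hc : 0 < ((M : ℝ) - 1) * ν := mul_pos (by linarith) hν
  have hA : 0 < μ / (((M : ℝ) - 1) * ν) := div_pos hμ hc
  set X : Ω → ℝ := fun ω => L ω * ((M : ℝ) - 1) * ν
  have hXm : Measurable X := by fun_prop
  have hX : ∀ ω, 0 ≤ X ω := fun ω => mul_nonneg (mul_nonneg (hLnn ω) (by linarith)) hν.le
  have hXtail : Tendsto (fun x => log (P.real {ω | x < X ω}) / x) atTop
      (𝓝 (-(μ / (((M : ℝ) - 1) * ν)))) := by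
    refine (tendsto_log_comp_div_const_div hc htail).congr fun x => ?_
    simp only [X, mul_assoc, gt_iff_lt, div_lt_iff₀ hc, measureReal_def]
  have ha0 : (0 : ℝ) < 1 / M := by positivity
  have ha1 : 1 / (M : ℝ) < 1 := (div_lt_one (by linarith)).2 hM1
  apply tendsto_log_min_one_div_log hA
  apply tendsto_log_div_log_of_isBigO hA
  · intro B hB hBA
    exact (isBigO_integral_one_sub_mul_exp_neg_pow_rpow hXm hX ha0 ha1.le hXtail hB hBA
      ).comp_div_two_of_rpow.add ((isBigO_rpow_sqrt_natCast_div_two hζ0 hζ1 B).const_mul_left 2)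
  · intro B hAB
    refine (isBigO_rpow_integral_one_sub_mul_exp_neg_pow hXm hX ha0.le ha1 hA hXtail hAB
      ).rpow_comp_div_two.trans (isBigO_of_le _ fun n => ?_)
    have hI : 0 ≤ ∫ ω, (1 - 1 / (M : ℝ) * exp (-X ω)) ^ (n / 2) ∂P :=
      integral_nonneg fun ω => pow_nonneg (one_sub_mul_exp_neg_nonneg ha0.le ha1.le (hX ω)) _
    rw [norm_of_nonneg hI, norm_of_nonneg (by positivity)]
    exact le_add_of_nonneg_right (by positivity)
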